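/- arXiv:2011.04071 — 9 statements merged into one kernel-verified Lean document; each statement's English description precedes it below -/
import Mathlib

section
/- Let D ⊆ ℝⁿ be a set that is symmetric under coordinate permutations (for every permutation π of [n] and x ∈ ℝⁿ, x ∈ D iff π(x) ∈ D) and satisfies D ∩ (D + z) = ∅ for every nonzero integer vector z ∈ ℤⁿ. Then for every x ∈ D and all indices i, j ∈ [n], if xᵢ - xⱼ is an integer, then xᵢ = xⱼ. -/
theorem stmt0 (n : ℕ) (D : Set (Fin n → ℝ))
    (hsym : ∀ (π : Equiv.Perm (Fin n)) (x : Fin n → ℝ), x ∈ D ↔ (fun i => x (π i)) ∈ D)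
    (hdisj : ∀ z : Fin n → ℤ, z ≠ 0 →
      D ∩ ((fun d => d + fun i => (z i : ℝ)) '' D) = ∅)
    (x : Fin n → ℝ) (hx : x ∈ D) (i j : Fin n) (k : ℤ) (hk : x i - x j = k) :
    x i = x j := by
  by_cases hij : i = j
  · rw [hij]
  by_cases hk0 : k = 0
  · subst hk0; push_cast at hk; linarith
  exfalso
  set z : Fin n → ℤ := fun l => if l = i then -k else if l = j then k else 0 with hz
  have hzne : z ≠ 0 := by
    intro h
    have := congrFun h j
    simp [hz, hij, Ne.symm hij] at this
    exact hk0 this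
  have hy : (fun l => x (Equiv.swap i j l)) ∈ D := (hsym (Equiv.swap i j) x).mp hx
  have hmem : (fun l => x (Equiv.swap i j l)) ∈ D ∩ ((fun d => d + fun l => ((z l : ℝ))) '' D) := by
    refine ⟨hy, ⟨x, hx, ?_⟩⟩
    funext l
    by_cases hli : l = i
    · subst hli
      simp [hz, Equiv.swap_apply_left]
      linarith
    by_cases hlj : l = j
    · subst hlj
      simp [hz, Equiv.swap_apply_right, Ne.symm hij]
      · linarith
    · simp [hz, Equiv.swap_apply_of_ne_of_ne hli hlj, hli, hlj]
  rw [hdisj z hzne] at hmem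
  exact hmem
end

section
/- Let a ∈ ℝⁿ, and suppose a is 'good': every interval of length (10 log n)/n on the torus ℝ/ℤ contains at least log n and at most 100 log n of the fractional parts {aᵢ}. Set Z = n/(10 log n) and define Cᵢ = Σ_{j ≠ i} exp(−Z·d(aᵢ,aⱼ)), where d(x,y) = min_{z ∈ ℤ, z≠0} |(x+z)−y|. Then Cᵢ ≤ 400 log n for every i. -/
open scoped Classical

/-- Torus-type distance: `d(x,y) = min_{z ∈ ℤ, z ≠ 0} |x + z - y|`. -/
noncomputable def dtor (x y : ℝ) : ℝ :=
  sInf {d : ℝ | ∃ z : ℤ, z ≠ 0 ∧ d = |x + z - y|}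

/-- Number of indices `i` whose fractional part `{aᵢ}` lies in the arc of
length `L` starting at `c` on the torus `ℝ/ℤ`. -/
noncomputable def torCount (n : ℕ) (a : Fin n → ℝ) (c L : ℝ) : ℕ :=
  (Finset.univ.filter fun i : Fin n => Int.fract (a i - c) ≤ L).card

/-- `a` is good: every interval of length `10 log n / n` on the torus contains at least
`log n` and at most `100 log n` of the fractional parts of the coordinates of `a`. -/
def IsGood (n : ℕ) (a : Fin n → ℝ) : Prop :=
  ∀ c : ℝ, Real.log n ≤ (torCount n a c (10 * Real.log n / n) : ℝ) ∧
    (torCount n a c (10 * Real.log n / n) : ℝ) ≤ 100 * Real.log n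

lemma dtor_ge (x y : ℝ) :
    min (Int.fract (y - x)) (1 - Int.fract (y - x)) ≤ dtor x y := by
  refine le_csInf ⟨_, 1, one_ne_zero, rfl⟩ ?_
  rintro d ⟨z, hz, rfl⟩
  set t := y - x with ht
  set f := Int.fract t with hf
  have h0 : 0 ≤ f := Int.fract_nonneg t
  have h1 : f < 1 := Int.fract_lt_one t
  have key : x + z - y = ((z - ⌊t⌋ : ℤ) : ℝ) - f := by
    have : f = t - ⌊t⌋ := rfl
    push_cast
    rw [this]; ring
  rw [key]
  rcases le_or_gt (z - ⌊t⌋ : ℤ) 0 with h | h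
  · have : ((z - ⌊t⌋ : ℤ) : ℝ) ≤ 0 := by exact_mod_cast h
    have habs : |((z - ⌊t⌋ : ℤ) : ℝ) - f| = f - ((z - ⌊t⌋ : ℤ) : ℝ) := by
      rw [abs_of_nonpos (by linarith)]; ring
    rw [habs]
    have := min_le_left f (1 - f)
    linarith
  · have : (1:ℝ) ≤ ((z - ⌊t⌋ : ℤ) : ℝ) := by exact_mod_cast h
    have habs : |((z - ⌊t⌋ : ℤ) : ℝ) - f| = ((z - ⌊t⌋ : ℤ) : ℝ) - f := by
      rw [abs_of_nonneg (by linarith)]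
    rw [habs]
    have := min_le_right f (1 - f)
    linarith

theorem stmt3 (n : ℕ) (hn : 2 ≤ n) (a : Fin n → ℝ) (ha : IsGood n a) (i : Fin n) :
    ∑ j ∈ Finset.univ.erase i,
        Real.exp (-(n / (10 * Real.log n)) * dtor (a i) (a j)) ≤
      400 * Real.log n := by
  have hn1 : (1:ℝ) < (n:ℝ) := by exact_mod_cast Nat.lt_of_lt_of_le one_lt_two hn
  have hnpos : (0:ℝ) < n := by linarith
  have hlog : 0 < Real.log n := Real.log_pos hn1
  have hlog2 : Real.log 2 ≤ Real.log n := by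
    apply Real.log_le_log (by norm_num)
    exact_mod_cast hn
  have hlog2' : (0.6931471803 : ℝ) < Real.log 2 := Real.log_two_gt_d9
  set L : ℝ := 10 * Real.log n / n with hL
  have hLpos : 0 < L := by positivity
  set Z : ℝ := (n:ℝ) / (10 * Real.log n) with hZ
  have hZpos : 0 < Z := by positivity
  have hZL : Z * L = 1 := by
    rw [hZ, hL]; field_simp
  have hnL : (1:ℝ)/2 < (n:ℝ) * L := by
    rw [hL]
    have : (n:ℝ) * (10 * Real.log n / n) = 10 * Real.log n := by field_simp
    rw [this]; linarith
  set f : Fin n → ℝ := fun j => Int.fract (a j - a i) with hf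
  set D : Fin n → ℝ := fun j => min (f j) (1 - f j) with hDdef
  have hf0 : ∀ j, 0 ≤ f j := fun j => Int.fract_nonneg _
  have hf1 : ∀ j, f j < 1 := fun j => Int.fract_lt_one _
  have hD0 : ∀ j, 0 ≤ D j := by
    intro j; simp only [hDdef, le_min_iff]
    exact ⟨hf0 j, by linarith [hf1 j]⟩
  have hDhalf : ∀ j, D j ≤ 1/2 := by
    intro j
    rcases le_total (f j) (1/2) with h | h
    · exact le_trans (min_le_left _ _) h
    · exact le_trans (min_le_right _ _) (by linarith)
  have hDdtor : ∀ j, D j ≤ dtor (a i) (a j) := by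
    intro j
    have := dtor_ge (a i) (a j)
    simpa [hDdef, hf] using this
  set kj : Fin n → ℕ := fun j => ⌊D j / L⌋₊ with hkj
  have hk_lt : ∀ j, kj j < n := by
    intro j
    rw [hkj]
    apply Nat.floor_lt (div_nonneg (hD0 j) hLpos.le) |>.mpr
    rw [div_lt_iff₀ hLpos]
    calc D j ≤ 1/2 := hDhalf j
      _ < n * L := hnL
  have hkL : ∀ j, (kj j : ℝ) * L ≤ D j := by
    intro j
    rw [← le_div_iff₀ hLpos]
    exact Nat.floor_le (div_nonneg (hD0 j) hLpos.le)
  have hkU : ∀ j, D j < ((kj j : ℝ) + 1) * L := by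
    intro j
    rw [← div_lt_iff₀ hLpos]
    exact_mod_cast Nat.lt_floor_add_one (D j / L)
  -- per-term bound
  have hterm : ∀ j, Real.exp (-Z * dtor (a i) (a j)) ≤ Real.exp (-(kj j : ℝ)) := by
    intro j
    apply Real.exp_le_exp.mpr
    have h1 : (kj j : ℝ) * L ≤ dtor (a i) (a j) := le_trans (hkL j) (hDdtor j)
    have h2 : Z * ((kj j : ℝ) * L) ≤ Z * dtor (a i) (a j) :=
      mul_le_mul_of_nonneg_left h1 hZpos.le
    have h3 : Z * ((kj j : ℝ) * L) = (kj j : ℝ) := by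
      rw [show Z * ((kj j : ℝ) * L) = (kj j : ℝ) * (Z * L) by ring, hZL, mul_one]
    linarith
  -- fiber cardinality bound
  have hcard : ∀ k : ℕ,
      (((Finset.univ.erase i).filter fun j => kj j = k).card : ℝ) ≤ 200 * Real.log n := by
    intro k
    have hsub : ((Finset.univ.erase i).filter fun j => kj j = k) ⊆
        (Finset.univ.filter fun j : Fin n =>
            Int.fract (a j - (a i + (k:ℝ) * L)) ≤ L) ∪
        (Finset.univ.filter fun j : Fin n =>
            Int.fract (a j - (a i - ((k:ℝ) + 1) * L)) ≤ L) := by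
      intro j hj
      simp only [Finset.mem_filter, Finset.mem_erase, Finset.mem_union, Finset.mem_univ,
        true_and] at hj ⊢
      obtain ⟨-, hjk⟩ := hj
      subst hjk
      rcases le_or_gt 1 L with hL1 | hL1
      · left; linarith [Int.fract_lt_one (a j - (a i + (kj j : ℝ) * L))]
      · have hlo := hkL j
        have hhi := hkU j
        rcases min_cases (f j) (1 - f j) with ⟨hmin, _⟩ | ⟨hmin, hle⟩
        all_goals have hlo' := hkL j
        all_goals have hhi' := hkU j
        · -- D j = f j
          have hDj : D j = f j := hmin
          left
          have heq : a j - (a i + (kj j : ℝ) * L) =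
              ((⌊a j - a i⌋ : ℤ) : ℝ) + (f j - (kj j : ℝ) * L) := by
            simp only [hf, Int.fract]; push_cast; ring
          rw [heq, Int.fract_intCast_add, Int.fract_eq_self.mpr]
          · linarith
          exact ⟨by linarith, by linarith⟩
        · -- D j = 1 - f j
          have hDj : D j = 1 - f j := hmin
          right
          have heq : a j - (a i - ((kj j : ℝ) + 1) * L) =
              ((⌊a j - a i⌋ + 1 : ℤ) : ℝ) + (f j + ((kj j : ℝ) + 1) * L - 1) := by
            simp only [hf, Int.fract]; push_cast; ring
          rw [heq, Int.fract_intCast_add, Int.fract_eq_self.mpr]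
          · linarith
          exact ⟨by linarith, by linarith⟩
    have hc1 := (ha (a i + (k:ℝ) * L)).2
    have hc2 := (ha (a i - ((k:ℝ) + 1) * L)).2
    have : ((Finset.univ.erase i).filter fun j => kj j = k).card ≤
        torCount n a (a i + (k:ℝ) * L) (10 * Real.log n / n) +
        torCount n a (a i - ((k:ℝ) + 1) * L) (10 * Real.log n / n) := by
      calc ((Finset.univ.erase i).filter fun j => kj j = k).card
          ≤ _ := Finset.card_le_card hsub
        _ ≤ _ := Finset.card_union_le _ _
    calc (((Finset.univ.erase i).filter fun j => kj j = k).card : ℝ)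
        ≤ (torCount n a (a i + (k:ℝ) * L) (10 * Real.log n / n) : ℝ) +
          (torCount n a (a i - ((k:ℝ) + 1) * L) (10 * Real.log n / n) : ℝ) := by
          exact_mod_cast this
      _ ≤ 100 * Real.log n + 100 * Real.log n := add_le_add hc1 hc2
      _ = 200 * Real.log n := by ring
  -- putting it together
  have hmain : ∑ j ∈ Finset.univ.erase i,
      Real.exp (-Z * dtor (a i) (a j)) ≤
      ∑ k ∈ Finset.range n, (200 * Real.log n) * Real.exp (-(k:ℝ)) := by
    calc ∑ j ∈ Finset.univ.erase i, Real.exp (-Z * dtor (a i) (a j))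
        ≤ ∑ j ∈ Finset.univ.erase i, Real.exp (-(kj j : ℝ)) :=
          Finset.sum_le_sum fun j _ => hterm j
      _ = ∑ k ∈ Finset.range n, ∑ j ∈ (Finset.univ.erase i).filter fun j => kj j = k,
            Real.exp (-(kj j : ℝ)) := by
          rw [Finset.sum_fiberwise_of_maps_to]
          intro j _
          exact Finset.mem_range.mpr (hk_lt j)
      _ ≤ ∑ k ∈ Finset.range n, (200 * Real.log n) * Real.exp (-(k:ℝ)) := by
          apply Finset.sum_le_sum
          intro k _
          have : ∑ j ∈ (Finset.univ.erase i).filter (fun j => kj j = k),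
              Real.exp (-(kj j : ℝ)) =
              (((Finset.univ.erase i).filter fun j => kj j = k).card : ℝ) *
                Real.exp (-(k:ℝ)) := by
            rw [Finset.sum_congr rfl (fun j hj => by
              simp only [Finset.mem_filter] at hj
              rw [hj.2]), Finset.sum_const, nsmul_eq_mul]
          rw [this]
          exact mul_le_mul_of_nonneg_right (hcard k) (Real.exp_nonneg _)
  have hgeom : ∑ k ∈ Finset.range n, Real.exp (-(k:ℝ)) ≤ 2 := by
    have hrw : ∀ k : ℕ, Real.exp (-(k:ℝ)) = (Real.exp (-1)) ^ k := by
      intro k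
      rw [← Real.exp_nat_mul]
      norm_num
    calc ∑ k ∈ Finset.range n, Real.exp (-(k:ℝ))
        = ∑ k ∈ Finset.range n, (Real.exp (-1)) ^ k := by
          exact Finset.sum_congr rfl fun k _ => hrw k
      _ ≤ ∑' k : ℕ, (Real.exp (-1)) ^ k := by
          apply Summable.sum_le_tsum
          · intro k _; positivity
          · exact summable_geometric_of_lt_one (by positivity)
              (Real.exp_lt_one_iff.mpr (by norm_num))
      _ = (1 - Real.exp (-1))⁻¹ := tsum_geometric_of_lt_one (by positivity)
          (Real.exp_lt_one_iff.mpr (by norm_num))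
      _ ≤ 2 := by
          rw [inv_le_comm₀ (by
            have : Real.exp (-1) < 1 := Real.exp_lt_one_iff.mpr (by norm_num)
            linarith [Real.exp_pos (-1)]) (by norm_num)]
          have h2e : (2:ℝ) ≤ Real.exp 1 := by
            have := Real.add_one_le_exp (1:ℝ)
            linarith
          have : Real.exp (-1) ≤ 1/2 := by
            rw [Real.exp_neg]
            rw [inv_le_comm₀ (Real.exp_pos 1) (by norm_num)]
            linarith
          linarith
  calc ∑ j ∈ Finset.univ.erase i,
        Real.exp (-((n:ℝ) / (10 * Real.log n)) * dtor (a i) (a j))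
      ≤ ∑ k ∈ Finset.range n, (200 * Real.log n) * Real.exp (-(k:ℝ)) := hmain
    _ = (200 * Real.log n) * ∑ k ∈ Finset.range n, Real.exp (-(k:ℝ)) := by
        rw [Finset.mul_sum]
    _ ≤ (200 * Real.log n) * 2 := by
        apply mul_le_mul_of_nonneg_left hgeom (by positivity)
    _ = 400 * Real.log n := by ring
end

section
/- There exists a constant c₂ > 0 such that for sufficiently large n the following holds. Set Z = n/(10 log n) and let a ∈ ℝⁿ be good, meaning every interval of length (10 log n)/n on the torus contains at least log n and at most 100 log n of the fractional parts {aᵢ}. Then the energy Ψ(a) = Σ_{i<j} exp(−Z·d(aᵢ,aⱼ)) satisfies Ψ(a) > c₂ (log n)². -/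
open scoped Classical

/-- The energy `Ψ(a) = Σ_{i<j} exp(-Z d(aᵢ,aⱼ))`. -/
noncomputable def psi (n : ℕ) (Z : ℝ) (a : Fin n → ℝ) : ℝ :=
  ∑ i : Fin n, ∑ j : Fin n,
    if i < j then Real.exp (-Z * dtor (a i) (a j)) else 0

open Finset

lemma dtor_le' (x y : ℝ) (z : ℤ) (hz : z ≠ 0) : dtor x y ≤ |x + z - y| := by
  refine csInf_le ⟨0, ?_⟩ ⟨z, hz, rfl⟩
  rintro d ⟨w, -, rfl⟩
  exact abs_nonneg _

lemma dtor_le_of_fract {c δ : ℝ} {x y : ℝ} (hx : Int.fract (x - c) ≤ δ)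
    (hy : Int.fract (y - c) ≤ δ) (hk : ⌊x - c⌋ ≠ ⌊y - c⌋) : dtor x y ≤ δ := by
  have hz : (⌊y - c⌋ - ⌊x - c⌋ : ℤ) ≠ 0 := sub_ne_zero.mpr (Ne.symm hk)
  refine (dtor_le' x y _ hz).trans ?_
  have h1 : x + ((⌊y - c⌋ - ⌊x - c⌋ : ℤ) : ℝ) - y
      = Int.fract (x - c) - Int.fract (y - c) := by
    simp only [Int.fract]
    push_cast
    ring
  have h2 := Int.fract_nonneg (x - c)
  have h3 := Int.fract_nonneg (y - c)
  rw [h1, abs_sub_le_iff]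
  constructor <;> linarith

lemma floor_fract_aux {y w : ℝ} {z : ℤ} (hy : y = z + w) (h0 : 0 ≤ w) (h1 : w < 1) :
    ⌊y⌋ = z ∧ Int.fract y = w := by
  have hf : ⌊y⌋ = z := by
    rw [hy, add_comm, Int.floor_add_intCast, Int.floor_eq_zero_iff.mpr ⟨h0, h1⟩, zero_add]
  refine ⟨hf, ?_⟩
  rw [Int.fract, hf, hy]
  push_cast
  ring

lemma psi_ge (n : ℕ) (Z : ℝ) (a : Fin n → ℝ) (Q : Finset (Fin n × Fin n)) (ε : ℝ) (hε : 0 ≤ ε)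
    (hQ : ∀ p ∈ Q, p.1 < p.2 ∧ ε ≤ Real.exp (-Z * dtor (a p.1) (a p.2))) :
    (Q.card : ℝ) * ε ≤ psi n Z a := by
  have h1 : psi n Z a = ∑ p ∈ Finset.univ ×ˢ Finset.univ,
      (if p.1 < p.2 then Real.exp (-Z * dtor (a p.1) (a p.2)) else 0) := by
    rw [Finset.sum_product]; rfl
  rw [h1]
  calc (Q.card:ℝ) * ε = ∑ _p ∈ Q, ε := by rw [Finset.sum_const, nsmul_eq_mul]
    _ ≤ ∑ p ∈ Q, (if p.1 < p.2 then Real.exp (-Z * dtor (a p.1) (a p.2)) else 0) :=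
        Finset.sum_le_sum fun p hp => by
          rw [if_pos (hQ p hp).1]; exact (hQ p hp).2
    _ ≤ _ := by
        apply Finset.sum_le_sum_of_subset_of_nonneg
        · intro p _; simp [Finset.mem_product]
        · intro p _ _; positivity

lemma card_filter_lt {n : ℕ} (R : Finset (Fin n × Fin n))
    (hsym : ∀ p ∈ R, (p.2, p.1) ∈ R) (hirr : ∀ p ∈ R, p.1 ≠ p.2) :
    2 * (R.filter fun p => p.1 < p.2).card = R.card := by
  have e1 : (R.filter fun p => ¬ p.1 < p.2) = R.filter fun p => p.2 < p.1 := by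
    apply Finset.filter_congr
    intro p hp
    simp only [not_lt]
    constructor
    · intro h; exact lt_of_le_of_ne h (Ne.symm (hirr p hp))
    · exact le_of_lt
  have e2 : (R.filter fun p => p.1 < p.2).card = (R.filter fun p => p.2 < p.1).card := by
    apply Finset.card_nbij' (fun p => (p.2, p.1)) (fun p => (p.2, p.1))
    · intro p hp
      simp only [Finset.mem_coe, Finset.mem_filter] at hp ⊢
      exact ⟨hsym p hp.1, hp.2⟩
    · intro p hp
      simp only [Finset.mem_coe, Finset.mem_filter] at hp ⊢
      exact ⟨hsym p hp.1, hp.2⟩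
    · intro p _; rfl
    · intro p _; rfl
  have := Finset.card_filter_add_card_filter_not (s := R) (p := fun p => p.1 < p.2)
  rw [e1] at this
  omega

lemma psi_lower_inner (n : ℕ) (Z : ℝ) (a : Fin n → ℝ) (T : Finset (Fin n)) (K : Fin n → ℤ)
    (ε : ℝ) (hε : 0 ≤ ε)
    (hmaj : ∀ κ : ℤ, (((T.filter fun i => K i = κ).card : ℝ)) ≤ (T.card : ℝ)/2)
    (h : ∀ i ∈ T, ∀ j ∈ T, K i ≠ K j → ε ≤ Real.exp (-Z * dtor (a i) (a j))) :
    (T.card : ℝ) * (T.card : ℝ) / 4 * ε ≤ psi n Z a := by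
  classical
  set R : Finset (Fin n × Fin n) := (T ×ˢ T).filter (fun p => ¬ (K p.2 = K p.1)) with hRdef
  have hRcard : ((T.card : ℝ)) * ((T.card : ℝ)/2) ≤ (R.card : ℝ) := by
    have h1 : R.card = ∑ p ∈ T ×ˢ T, if ¬ (K p.2 = K p.1) then 1 else 0 :=
      Finset.card_filter _ _
    rw [Finset.sum_product] at h1
    have h6 : R.card = ∑ i ∈ T, ((T.filter fun j => ¬ (K j = K i)).card) := by
      rw [h1]
      apply Finset.sum_congr rfl
      intro i _
      rw [Finset.card_filter]
    have h2 : ∀ i ∈ T, ((T.card:ℝ)/2) ≤ ((T.filter fun j => ¬ (K j = K i)).card : ℝ) := by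
      intro i _
      have h3 := Finset.card_filter_add_card_filter_not (s := T)
        (p := fun j => K j = K i)
      have h4 := hmaj (K i)
      have h5 : ((T.filter fun j => K j = K i).card : ℝ)
          + ((T.filter fun j => ¬ K j = K i).card : ℝ) = (T.card : ℝ) := by
        exact_mod_cast h3
      linarith
    rw [h6]
    push_cast
    calc (T.card:ℝ) * ((T.card:ℝ)/2) = ∑ _i ∈ T, ((T.card:ℝ)/2) := by
          rw [Finset.sum_const, nsmul_eq_mul]
      _ ≤ _ := Finset.sum_le_sum h2
  set Q : Finset (Fin n × Fin n) := R.filter (fun p => p.1 < p.2) with hQdef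
  have hQcard : 2 * Q.card = R.card := by
    rw [hQdef]
    apply card_filter_lt
    · intro p hp
      rw [hRdef] at hp ⊢
      simp only [Finset.mem_filter, Finset.mem_product] at hp ⊢
      exact ⟨⟨hp.1.2, hp.1.1⟩, fun hh => hp.2 hh.symm⟩
    · intro p hp hh
      rw [hRdef] at hp
      simp only [Finset.mem_filter] at hp
      exact hp.2 (by rw [hh])
  have hpsi := psi_ge n Z a Q ε hε ?_
  · have hQR : (R.card : ℝ) = 2 * (Q.card:ℝ) := by exact_mod_cast hQcard.symm
    have : (T.card : ℝ) * (T.card : ℝ) / 4 ≤ (Q.card : ℝ) := by linarith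
    nlinarith
  · intro p hp
    rw [hQdef] at hp
    simp only [Finset.mem_filter] at hp
    refine ⟨hp.2, ?_⟩
    rw [hRdef] at hp
    simp only [Finset.mem_filter, Finset.mem_product] at hp
    exact h p.1 hp.1.1.1 p.2 hp.1.1.2 (fun hh => hp.1.2 hh.symm)

lemma psi_lower_two (n : ℕ) (Z : ℝ) (a : Fin n → ℝ) (A B : Finset (Fin n))
    (hdisj : Disjoint A B) (ε : ℝ) (hε : 0 ≤ ε)
    (h : ∀ i ∈ A, ∀ j ∈ B, ε ≤ Real.exp (-Z * dtor (a i) (a j))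
        ∧ ε ≤ Real.exp (-Z * dtor (a j) (a i))) :
    (A.card : ℝ) * (B.card : ℝ) * ε ≤ psi n Z a := by
  classical
  set Q : Finset (Fin n × Fin n) :=
    ((A ×ˢ B) ∪ (B ×ˢ A)).filter (fun p => p.1 < p.2) with hQdef
  have hne : ∀ i ∈ A, ∀ j ∈ B, i ≠ j := by
    intro i hi j hj hh
    exact Finset.disjoint_left.mp hdisj hi (hh ▸ hj)
  have hQcard : A.card * B.card ≤ Q.card := by
    rw [← Finset.card_product]
    apply Finset.card_le_card_of_injOn (fun p => if p.1 < p.2 then p else (p.2, p.1))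
    · intro p hp
      simp only [Finset.mem_coe, Finset.mem_product] at hp
      rw [hQdef]
      simp only [Finset.mem_coe, Finset.mem_filter, Finset.mem_union, Finset.mem_product]
      rcases lt_or_gt_of_ne (hne p.1 hp.1 p.2 hp.2) with hlt | hlt
      · rw [if_pos hlt]; exact ⟨Or.inl ⟨hp.1, hp.2⟩, hlt⟩
      · rw [if_neg (by exact not_lt.mpr hlt.le)]; exact ⟨Or.inr ⟨hp.2, hp.1⟩, hlt⟩
    · intro p hp q hq hpq
      simp only [Finset.mem_coe, Finset.mem_product] at hp hq
      dsimp only at hpq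
      by_cases h1 : p.1 < p.2
      · by_cases h2 : q.1 < q.2
        · rw [if_pos h1, if_pos h2] at hpq; exact hpq
        · rw [if_pos h1, if_neg h2] at hpq
          exfalso
          have hb : p.1 ∈ B := by
            rw [Prod.ext_iff] at hpq
            rw [hpq.1]; exact hq.2
          exact Finset.disjoint_left.mp hdisj hp.1 hb
      · by_cases h2 : q.1 < q.2
        · rw [if_neg h1, if_pos h2] at hpq
          exfalso
          have hb : q.1 ∈ B := by
            rw [Prod.ext_iff] at hpq
            rw [← hpq.1]; exact hp.2
          exact Finset.disjoint_left.mp hdisj hq.1 hb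
        · rw [if_neg h1, if_neg h2] at hpq
          rw [Prod.ext_iff] at hpq ⊢
          exact ⟨hpq.2, hpq.1⟩
  have hpsi := psi_ge n Z a Q ε hε ?_
  · have hQc : (A.card:ℝ) * (B.card:ℝ) ≤ (Q.card:ℝ) := by exact_mod_cast hQcard
    nlinarith
  · intro p hp
    rw [hQdef] at hp
    simp only [Finset.mem_filter, Finset.mem_union, Finset.mem_product] at hp
    refine ⟨hp.2, ?_⟩
    rcases hp.1 with hh | hh
    · exact (h p.1 hh.1 p.2 hh.2).1
    · exact (h p.2 hh.2 p.1 hh.1).2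

set_option maxHeartbeats 2000000 in
theorem stmt4 : ∃ c₂ : ℝ, 0 < c₂ ∧ ∃ N : ℕ, ∀ n : ℕ, N ≤ n →
    ∀ a : Fin n → ℝ, IsGood n a →
      c₂ * (Real.log n) ^ 2 < psi n (n / (10 * Real.log n)) a := by
  refine ⟨Real.exp (-3) / 8, by positivity, 4000000, fun n hn a ha => ?_⟩
  have hnR : (4000000:ℝ) ≤ (n:ℝ) := by exact_mod_cast hn
  have hn0 : (0:ℝ) < n := by linarith
  have hG1 : 1 ≤ Real.log n := by
    rw [Real.le_log_iff_exp_le hn0]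
    have h3 := Real.exp_one_lt_d9
    linarith
  set G := Real.log n with hGdef
  have hG0 : (0:ℝ) < G := by linarith
  have hGn : 1000 * G ≤ n := by
    have hs : (2000:ℝ) ≤ Real.sqrt n := by
      rw [show (2000:ℝ) = Real.sqrt (2000^2) by
        rw [Real.sqrt_sq]; norm_num]
      apply Real.sqrt_le_sqrt; nlinarith
    have h1 : Real.log (Real.sqrt n) ≤ Real.sqrt n - 1 :=
      Real.log_le_sub_one_of_pos (by positivity)
    have h2 : Real.log (Real.sqrt n) = G / 2 := by
      rw [hGdef]; exact Real.log_sqrt hn0.le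
    nlinarith [Real.sq_sqrt hn0.le]
  set L : ℝ := 10 * G / n with hLdef
  have hL0 : (0:ℝ) < L := by rw [hLdef]; positivity
  have hL100 : L ≤ 1/100 := by
    rw [hLdef, div_le_iff₀ hn0]
    linarith
  set Z : ℝ := (n:ℝ) / (10 * G) with hZdef
  have hZL3 : Z * (3 * L) = 3 := by
    rw [hZdef, hLdef]
    field_simp
    try ring
  have hZ0 : (0:ℝ) < Z := by rw [hZdef]; positivity
  have hcontrib : ∀ x y : ℝ, dtor x y ≤ 3 * L →
      Real.exp (-3) ≤ Real.exp (-Z * dtor x y) := by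
    intro x y h
    apply Real.exp_le_exp.mpr
    nlinarith
  have hexp0 := Real.exp_pos (-3)
  -- the arcs
  set m : ℕ := ⌊1/L⌋₊ with hmdef
  have hmL : (m:ℝ) * L ≤ 1 := by
    have h1 : (m:ℝ) ≤ 1/L := Nat.floor_le (by positivity)
    calc (m:ℝ) * L ≤ (1/L) * L := by nlinarith
      _ = 1 := by field_simp
  have hmL2 : 1 < ((m:ℝ) + 1) * L := by
    have h1 : 1/L < (m:ℝ) + 1 := Nat.lt_floor_add_one (1/L)
    calc (1:ℝ) = (1/L) * L := by field_simp
      _ < ((m:ℝ) + 1) * L := by nlinarith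
  have hm3 : 3 ≤ m := by
    rw [hmdef]
    apply Nat.le_floor
    rw [le_div_iff₀ hL0]
    push_cast
    linarith
  set T : ℕ → Finset (Fin n) :=
    (fun s => Finset.univ.filter fun i => Int.fract (a i - (s:ℝ)*L) ≤ L) with hTdef
  have hT : ∀ s : ℕ, G ≤ ((T s).card : ℝ) := by
    intro s
    have := (ha ((s:ℝ)*L)).1
    convert this using 3
    rfl
  set K : ℕ → Fin n → ℤ := (fun s i => ⌊a i - (s:ℝ)*L⌋) with hKdef
  have hTmem : ∀ s : ℕ, ∀ i ∈ T s, Int.fract (a i - (s:ℝ)*L) ≤ L := by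
    intro s i hi
    rw [hTdef] at hi
    exact (Finset.mem_filter.mp hi).2
  by_cases hcase : ∃ s : ℕ, ∀ κ : ℤ,
      ((((T s).filter fun i => K s i = κ).card : ℝ)) ≤ ((T s).card : ℝ)/2
  · -- Case 1: some arc with no majority class
    obtain ⟨s, hmaj⟩ := hcase
    have hpsi := psi_lower_inner n Z a (T s) (K s) (Real.exp (-3)) hexp0.le hmaj ?_
    · have hTs := hT s
      have h9 : G * G ≤ ((T s).card:ℝ) * ((T s).card:ℝ) :=
        mul_le_mul hTs hTs hG0.le (hG0.le.trans hTs)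
      nlinarith [hpsi, mul_le_mul_of_nonneg_right h9 hexp0.le,
        mul_pos (pow_pos hG0 2) hexp0]
    · intro i hi j hj hK
      apply hcontrib
      apply dtor_le_of_fract (c := (s:ℝ)*L)
      · exact le_trans (hTmem s i hi) (by linarith)
      · exact le_trans (hTmem s j hj) (by linarith)
      · exact hK
  · -- Case 2: every arc has a strict majority class
    push_neg at hcase
    choose κ hκ using hcase
    set A : ℕ → Finset (Fin n) := (fun s => (T s).filter fun i => K s i = κ s) with hAdef
    have hAcard : ∀ s, G/2 < ((A s).card : ℝ) := by
      intro s
      have h1 := hκ s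
      have h2 := hT s
      rw [hAdef]
      simp only
      linarith
    have hAT : ∀ s : ℕ, ∀ i ∈ A s,
        Int.fract (a i - (s:ℝ)*L) ≤ L ∧ ⌊a i - (s:ℝ)*L⌋ = κ s := by
      intro s i hi
      rw [hAdef] at hi
      simp only [Finset.mem_filter] at hi
      exact ⟨hTmem s i hi.1, hi.2⟩
    obtain ⟨A', B', hA'c, hB'c, hdisj, hAB⟩ :
        ∃ A' B' : Finset (Fin n), G/2 < (A'.card:ℝ) ∧ G/2 < (B'.card:ℝ) ∧
          Disjoint A' B' ∧
          ∀ i ∈ A', ∀ j ∈ B', dtor (a i) (a j) ≤ 3*L ∧ dtor (a j) (a i) ≤ 3*L := by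
      by_cases hchain : ∀ s : ℕ, s + 1 < m → κ s = κ (s+1)
      · -- all adjacent majorities agree: use the wrap-around pair of arcs
        have hconst : ∀ t, t < m → κ t = κ 0 := by
          intro t ht
          induction t with
          | zero => rfl
          | succ u ih =>
            rw [← hchain u ht]
            exact ih (lt_trans (Nat.lt_succ_self u) ht)
        have hwrapne : κ 0 - 1 ≠ κ (m-1) := by
          rw [hconst (m-1) (by omega)]
          omega
        have hMr : ((m-1:ℕ):ℝ) = (m:ℝ) - 1 := by
          rw [Nat.cast_sub (by omega : 1 ≤ m)]
          norm_num
        -- bound for the wrap offset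
        have hoff1 : 0 ≤ 1 - ((m-1:ℕ):ℝ)*L := by
          rw [hMr]; nlinarith
        have hoff2 : 1 - ((m-1:ℕ):ℝ)*L ≤ 2*L := by
          rw [hMr]; nlinarith
        have hA0 : ∀ i ∈ A 0, ⌊a i - ((m-1:ℕ):ℝ)*L⌋ = κ 0 - 1 ∧
            Int.fract (a i - ((m-1:ℕ):ℝ)*L) ≤ 3*L := by
          intro i hi
          obtain ⟨hf, hk⟩ := hAT 0 i hi
          have hf0 := Int.fract_nonneg (a i - ((0:ℕ):ℝ)*L)
          have hxe : (a i - ((0:ℕ):ℝ)*L)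
              = (κ 0 : ℝ) + Int.fract (a i - ((0:ℕ):ℝ)*L) := by
            conv_lhs => rw [← Int.floor_add_fract (a i - ((0:ℕ):ℝ)*L)]
            rw [hk]
          have h0L : ((0:ℕ):ℝ)*L = 0 := by norm_num
          have hcast : ((κ 0 - 1 : ℤ):ℝ) = (κ 0 : ℝ) - 1 := by push_cast; ring
          have hye : a i - ((m-1:ℕ):ℝ)*L
              = ((κ 0 - 1 : ℤ):ℝ)
                + (Int.fract (a i - ((0:ℕ):ℝ)*L) + (1 - ((m-1:ℕ):ℝ)*L)) := by
            rw [hcast]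
            linarith
          obtain ⟨hfl, hfr⟩ := floor_fract_aux hye (by linarith) (by linarith)
          refine ⟨hfl, ?_⟩
          rw [hfr]
          linarith
        refine ⟨A 0, A (m-1), hAcard 0, hAcard (m-1), ?_, ?_⟩
        · rw [Finset.disjoint_left]
          intro i hi0 him
          apply hwrapne
          rw [← (hA0 i hi0).1, (hAT (m-1) i him).2]
        · intro i hi j hj
          have h1 := hA0 i hi
          have h2 := hAT (m-1) j hj
          have hkn : ⌊a i - ((m-1:ℕ):ℝ)*L⌋ ≠ ⌊a j - ((m-1:ℕ):ℝ)*L⌋ := by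
            rw [h1.1, h2.2]
            exact hwrapne
          constructor
          · exact dtor_le_of_fract h1.2 (le_trans h2.1 (by linarith)) hkn
          · exact dtor_le_of_fract (le_trans h2.1 (by linarith)) h1.2 (Ne.symm hkn)
      · -- some adjacent pair of arcs with different majorities
        push_neg at hchain
        obtain ⟨s, hsm, hsk⟩ := hchain
        have hScast : ((s+1:ℕ):ℝ) = (s:ℝ) + 1 := by push_cast; ring
        have hA1 : ∀ j ∈ A (s+1), ⌊a j - (s:ℝ)*L⌋ = κ (s+1) ∧
            Int.fract (a j - (s:ℝ)*L) ≤ 3*L := by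
          intro j hj
          obtain ⟨hf, hk⟩ := hAT (s+1) j hj
          have hf0 := Int.fract_nonneg (a j - ((s+1:ℕ):ℝ)*L)
          have hxe : (a j - ((s+1:ℕ):ℝ)*L)
              = (κ (s+1) : ℝ) + Int.fract (a j - ((s+1:ℕ):ℝ)*L) := by
            conv_lhs => rw [← Int.floor_add_fract (a j - ((s+1:ℕ):ℝ)*L)]
            rw [hk]
          have hye : a j - (s:ℝ)*L
              = ((κ (s+1) : ℤ):ℝ)
                + (Int.fract (a j - ((s+1:ℕ):ℝ)*L) + L) := by
            rw [hScast] at hxe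
            push_cast
            linarith [hxe]
          obtain ⟨hfl, hfr⟩ := floor_fract_aux hye (by linarith) (by linarith)
          refine ⟨hfl, ?_⟩
          rw [hfr]
          linarith
        refine ⟨A s, A (s+1), hAcard s, hAcard (s+1), ?_, ?_⟩
        · rw [Finset.disjoint_left]
          intro i hi0 him
          apply hsk
          rw [← (hAT s i hi0).2, (hA1 i him).1]
        · intro i hi j hj
          have h1 := hAT s i hi
          have h2 := hA1 j hj
          have hkn : ⌊a i - (s:ℝ)*L⌋ ≠ ⌊a j - (s:ℝ)*L⌋ := by
            rw [h1.2, h2.1]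
            exact hsk
          constructor
          · exact dtor_le_of_fract (le_trans h1.1 (by linarith)) h2.2 hkn
          · exact dtor_le_of_fract h2.2 (le_trans h1.1 (by linarith)) (Ne.symm hkn)
    have hpsi := psi_lower_two n Z a A' B' hdisj (Real.exp (-3)) hexp0.le ?_
    · have hAB2 : (G/2)*(G/2) < (A'.card:ℝ)*(B'.card:ℝ) := by nlinarith
      nlinarith [hpsi, mul_lt_mul_of_pos_right hAB2 hexp0,
        mul_pos (pow_pos hG0 2) hexp0]
    · intro i hi j hj
      exact ⟨hcontrib _ _ (hAB i hi j hj).1, hcontrib _ _ (hAB i hi j hj).2⟩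
end

section
/- Let D ⊆ ℝⁿ be a measurable tiling body of volume 1 for ℤⁿ, let u ∈ ℝⁿ be fixed, and let a be uniform on D. Define ε_u = Pr_{a ∈ D}[the segment {a + t·u : t ∈ [0,1]} is not contained in D]. Then the total variation distance between the distribution of a and the distribution of a − u is at most ε_u + ε_{−u}. -/
open MeasureTheory

theorem stmt5 (n : ℕ) (D : Set (Fin n → ℝ)) (hD : MeasurableSet D)
    (hvol : volume D = 1)
    (hcover : ∀ x : Fin n → ℝ, ∃ z : Fin n → ℤ, (fun i => x i - (z i : ℝ)) ∈ D)
    (hdisj : ∀ z z' : Fin n → ℤ, z ≠ z' →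
      interior ((fun d => (fun i => d i + (z i : ℝ))) '' D) ∩
        interior ((fun d => (fun i => d i + (z' i : ℝ))) '' D) = ∅)
    (u : Fin n → ℝ)
    -- `eps v` is the probability, for `a` uniform on `D`, that the segment
    -- `{a + t • v : t ∈ [0,1]}` is not contained in `D`.
    (eps : (Fin n → ℝ) → ℝ)
    (heps : ∀ v, eps v =
      ((volume.restrict D) {a | ¬ ∀ t ∈ Set.Icc (0:ℝ) 1, a + t • v ∈ D}).toReal) :
    ∀ K : Set (Fin n → ℝ), MeasurableSet K →
      |((volume.restrict D) K).toReal -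
          (((volume.restrict D).map (fun a => a - u)) K).toReal| ≤
        eps u + eps (-u) := by
  intro K hK
  have hTm : Measurable (fun a : Fin n → ℝ => a - u) :=
    measurable_id.sub measurable_const
  -- bad sets
  set B1 : Set (Fin n → ℝ) := {a | ¬ ∀ t ∈ Set.Icc (0:ℝ) 1, a + t • u ∈ D} with hB1
  set B2 : Set (Fin n → ℝ) := {a | ¬ ∀ t ∈ Set.Icc (0:ℝ) 1, a + t • (-u) ∈ D} with hB2
  -- D' = D - u
  set D' : Set (Fin n → ℝ) := (fun a => a + u) ⁻¹' D with hD'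
  -- translation invariance
  have pre_sub : ∀ s : Set (Fin n → ℝ), volume ((fun a => a - u) ⁻¹' s) = volume s := by
    intro s
    have : (fun a : Fin n → ℝ => a - u) = (fun a => a + (-u)) := by
      funext a; exact sub_eq_add_neg a u
    rw [this]
    exact measure_preimage_add_right volume (-u) s
  have pre_add : ∀ s : Set (Fin n → ℝ), volume ((fun a => a + u) ⁻¹' s) = volume s :=
    fun s => measure_preimage_add_right volume u s
  -- mapped measure value
  have hmap : (((volume.restrict D).map (fun a => a - u)) K) = volume (K ∩ D') := by
    rw [Measure.map_apply hTm hK, Measure.restrict_apply' hD]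
    have hset : (fun a : Fin n → ℝ => a - u) ⁻¹' K ∩ D
        = (fun a : Fin n → ℝ => a - u) ⁻¹' (K ∩ D') := by
      ext x
      simp only [Set.mem_inter_iff, Set.mem_preimage, hD', sub_add_cancel]
    rw [hset, pre_sub]
  -- key inequalities in ℝ≥0∞
  have h1 : volume (K ∩ D) ≤ volume (K ∩ D') + volume (D \ D') := by
    refine le_trans (measure_mono ?_) (measure_union_le _ _)
    intro x hx
    by_cases h : x ∈ D'
    · exact Or.inl ⟨hx.1, h⟩
    · exact Or.inr ⟨hx.2, h⟩
  have h2 : volume (K ∩ D') ≤ volume (K ∩ D) + volume (D' \ D) := by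
    refine le_trans (measure_mono ?_) (measure_union_le _ _)
    intro x hx
    by_cases h : x ∈ D
    · exact Or.inl ⟨hx.1, h⟩
    · exact Or.inr ⟨hx.2, h⟩
  -- bounds on the boundary pieces
  have hb1 : volume (D \ D') ≤ volume (B1 ∩ D) := by
    apply measure_mono
    rintro x ⟨hxD, hxD'⟩
    refine ⟨?_, hxD⟩
    intro hall
    apply hxD'
    have := hall 1 ⟨zero_le_one, le_refl 1⟩
    simpa [hD', one_smul] using this
  have hshift : volume (D' \ D) = volume (D \ ((fun a => a - u) ⁻¹' D)) := by
    rw [← pre_add (D \ ((fun a => a - u) ⁻¹' D))]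
    congr 1
    ext x
    simp only [Set.mem_preimage, Set.mem_diff, hD', add_sub_cancel_right]
  have hb2 : volume (D' \ D) ≤ volume (B2 ∩ D) := by
    rw [hshift]
    apply measure_mono
    rintro x ⟨hxD, hxD'⟩
    refine ⟨?_, hxD⟩
    intro hall
    apply hxD'
    have := hall 1 ⟨zero_le_one, le_refl 1⟩
    simpa [one_smul, sub_eq_add_neg] using this
  -- finiteness
  have fin : ∀ s : Set (Fin n → ℝ), volume (s ∩ D) ≠ ⊤ := by
    intro s
    refine ne_top_of_le_ne_top ?_ (measure_mono Set.inter_subset_right)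
    rw [hvol]; exact ENNReal.one_ne_top
  have finD' : volume (K ∩ D') ≠ ⊤ := by
    refine ne_top_of_le_ne_top ?_ (measure_mono Set.inter_subset_right)
    rw [hD', pre_add, hvol]; exact ENNReal.one_ne_top
  -- pass to reals
  rw [Measure.restrict_apply' hD, hmap, heps u, heps (-u),
    Measure.restrict_apply' hD, Measure.restrict_apply' hD]
  have e1nn : (0:ℝ) ≤ (volume (B1 ∩ D)).toReal := ENNReal.toReal_nonneg
  have e2nn : (0:ℝ) ≤ (volume (B2 ∩ D)).toReal := ENNReal.toReal_nonneg
  rw [abs_sub_le_iff]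
  constructor
  · have : (volume (K ∩ D)).toReal ≤ (volume (K ∩ D')).toReal + (volume (B1 ∩ D)).toReal := by
      rw [← ENNReal.toReal_add finD' (fin B1)]
      exact ENNReal.toReal_mono (by simp [finD', fin B1]) (h1.trans (by gcongr))
    linarith
  · have : (volume (K ∩ D')).toReal ≤ (volume (K ∩ D)).toReal + (volume (B2 ∩ D)).toReal := by
      rw [← ENNReal.toReal_add (fin K) (fin B2)]
      exact ENNReal.toReal_mono (by simp [fin K, fin B2]) (h2.trans (by gcongr))
    linarith
end

section
/- Let r₁,…,r_m ≥ 0 and d₁,…,d_m ∈ ℝ with |dⱼ| ≤ rⱼ/2 for all j, with T = Σⱼ rⱼ > 0. Set T' = Σⱼ (rⱼ + dⱼ) and define probability vectors pⱼ = rⱼ/T and qⱼ = (rⱼ + dⱼ)/T'. Then there is an absolute constant C such that Σⱼ |pⱼ − qⱼ| ≤ C · Σⱼ (|dⱼ|/rⱼ) · min(rⱼ, T − rⱼ)/T, where the j-th summand is interpreted as 0 when rⱼ = 0. -/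
theorem stmt6 : ∃ C : ℝ, 0 < C ∧
    ∀ (m : ℕ) (r d : Fin m → ℝ),
      (∀ j, 0 ≤ r j) → (∀ j, |d j| ≤ r j / 2) → (0 < ∑ j, r j) →
      ∑ j, |r j / (∑ j', r j') - (r j + d j) / (∑ j', (r j' + d j'))| ≤
        C * ∑ j, (|d j| / r j) * (min (r j) ((∑ j', r j') - r j) / (∑ j', r j')) := by
  refine ⟨4, by norm_num, ?_⟩
  intro m r d hr hd hT
  set T := ∑ j, r j with hTdef
  set D := ∑ j, d j with hDdef
  set S := ∑ j, |d j| with hSdef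
  have hT' : ∑ j', (r j' + d j') = T + D := by
    rw [Finset.sum_add_distrib]
  have hST : S ≤ T / 2 := by
    calc S ≤ ∑ j, r j / 2 := Finset.sum_le_sum (fun j _ => hd j)
    _ = T / 2 := by rw [← Finset.sum_div]
  have hDle : |D| ≤ T / 2 :=
    le_trans (Finset.abs_sum_le_sum_abs _ _) hST
  have hT2 : T / 2 ≤ T + D := by
    have h := abs_le.mp hDle
    linarith [h.1]
  have hT'pos : (0:ℝ) < T + D := by linarith
  have hTne : T ≠ 0 := ne_of_gt hT
  have hrT : ∀ j, r j ≤ T := fun j =>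
    Finset.single_le_sum (fun k _ => hr k) (Finset.mem_univ j)
  -- pointwise equality
  have key : ∀ j, |r j / T - (r j + d j) / (T + D)| =
      |r j * D - d j * T| / (T * (T + D)) := by
    intro j
    rw [div_sub_div _ _ hTne (ne_of_gt hT'pos), abs_div,
      abs_of_pos (by positivity : (0:ℝ) < T * (T + D))]
    congr 1
    ring
  -- numerator bound
  have habs : ∀ j, |D - d j| ≤ S - |d j| := by
    intro j
    have h1 : D - d j = ∑ k ∈ Finset.univ.erase j, d k :=
      (Finset.sum_erase_eq_sub (Finset.mem_univ j)).symm
    have h2 : S - |d j| = ∑ k ∈ Finset.univ.erase j, |d k| :=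
      (Finset.sum_erase_eq_sub (Finset.mem_univ j)).symm
    rw [h1, h2]
    exact Finset.abs_sum_le_sum_abs _ _
  have hnum : ∀ j, |r j * D - d j * T| ≤
      r j * (S - |d j|) + |d j| * (T - r j) := by
    intro j
    have he : r j * D - d j * T = r j * (D - d j) - d j * (T - r j) := by ring
    rw [he]
    calc |r j * (D - d j) - d j * (T - r j)|
        ≤ |r j * (D - d j)| + |d j * (T - r j)| := abs_sub _ _
      _ = r j * |D - d j| + |d j| * |T - r j| := by
          rw [abs_mul, abs_mul, abs_of_nonneg (hr j)]
      _ = r j * |D - d j| + |d j| * (T - r j) := by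
          rw [abs_of_nonneg (show (0:ℝ) ≤ T - r j by linarith [hrT j])]
      _ ≤ r j * (S - |d j|) + |d j| * (T - r j) := by
          have := habs j
          nlinarith [hr j]
  -- sum of bounds
  have hsum : ∑ j, (r j * (S - |d j|) + |d j| * (T - r j)) =
      2 * ∑ j, |d j| * (T - r j) := by
    have e1 : ∑ j, (r j * (S - |d j|) + |d j| * (T - r j)) =
        (∑ j, r j * S - ∑ j, r j * |d j|) + (∑ j, |d j| * T - ∑ j, |d j| * r j) := by
      rw [← Finset.sum_sub_distrib, ← Finset.sum_sub_distrib, ← Finset.sum_add_distrib]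
      apply Finset.sum_congr rfl
      intro j _
      ring
    have e2 : ∑ j, r j * S = T * S := by rw [← Finset.sum_mul]
    have e3 : ∑ j, |d j| * T = S * T := by rw [← Finset.sum_mul]
    have e4 : ∑ j, r j * |d j| = ∑ j, |d j| * r j :=
      Finset.sum_congr rfl (fun j _ => mul_comm _ _)
    have e5 : ∑ j, |d j| * (T - r j) = ∑ j, |d j| * T - ∑ j, |d j| * r j := by
      rw [← Finset.sum_sub_distrib]
      apply Finset.sum_congr rfl
      intro j _
      ring
    rw [e1, e2, e3, e4, e5, e3]
    ring
  -- final per-term bound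
  have last : ∀ j, |d j| * (T - r j) / T ^ 2 ≤
      |d j| / r j * (min (r j) (T - r j) / T) := by
    intro j
    rcases eq_or_lt_of_le (hr j) with h0 | h0
    · have hdj : d j = 0 := by
        have h := hd j
        rw [← h0] at h
        have := abs_nonneg (d j)
        have : |d j| = 0 := le_antisymm (by linarith) (abs_nonneg _)
        exact abs_eq_zero.mp this
      simp [hdj]
    · have hmin : r j * (T - r j) ≤ min (r j) (T - r j) * T := by
        rcases le_total (r j) (T - r j) with h | h
        · rw [min_eq_left h]
          nlinarith [hrT j]
        · rw [min_eq_right h]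
          nlinarith [hr j, hrT j]
      rw [div_mul_div_comm, div_le_div_iff₀ (by positivity) (by positivity)]
      nlinarith [mul_le_mul_of_nonneg_left hmin (by positivity : (0:ℝ) ≤ |d j| * T), hT, abs_nonneg (d j)]
  have hXnn : 0 ≤ ∑ j, |d j| * (T - r j) :=
    Finset.sum_nonneg (fun j _ => mul_nonneg (abs_nonneg _) (by linarith [hrT j]))
  calc ∑ j, |r j / T - (r j + d j) / (∑ j', (r j' + d j'))|
      = ∑ j, |r j * D - d j * T| / (T * (T + D)) := by
        apply Finset.sum_congr rfl
        intro j _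
        rw [hT']
        exact key j
    _ ≤ ∑ j, (r j * (S - |d j|) + |d j| * (T - r j)) / (T * (T + D)) := by
        apply Finset.sum_le_sum
        intro j _
        exact div_le_div₀ ((abs_nonneg _).trans (hnum j)) (hnum j) (by positivity) le_rfl
    _ = (∑ j, (r j * (S - |d j|) + |d j| * (T - r j))) / (T * (T + D)) := by
        rw [Finset.sum_div]
    _ = (2 * ∑ j, |d j| * (T - r j)) / (T * (T + D)) := by rw [hsum]
    _ ≤ (2 * ∑ j, |d j| * (T - r j)) / (T * (T / 2)) := by
        apply div_le_div₀ (by linarith) le_rfl (by positivity)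
        have := hT
        nlinarith
    _ = 4 * ∑ j, |d j| * (T - r j) / T ^ 2 := by
        rw [Finset.mul_sum, Finset.mul_sum, Finset.sum_div]
        apply Finset.sum_congr rfl
        intro j _
        field_simp
        ring
    _ ≤ 4 * ∑ j, |d j| / r j * (min (r j) (T - r j) / T) := by
        have : ∑ j, |d j| * (T - r j) / T ^ 2 ≤
            ∑ j, |d j| / r j * (min (r j) (T - r j) / T) :=
          Finset.sum_le_sum (fun j _ => last j)
        linarith
end

section
/- With the rounding map R of the previous construction (defined from a map S on fractional-part multisets avoiding 0 and the input's fractional parts), let x, x + Δ ∈ ℝⁿ satisfy: (1) S(x) = S(x+Δ) =: z, and (2) for every i and every λ ∈ [0,1], the fractional part of xᵢ + λΔᵢ is not equal to z. Then R(x) = R(x + Δ), i.e., x and x + Δ lie in the same cell of the tiling induced by D = R⁻¹(0). -/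
/-- The rounding map built from `S`: round coordinate `i` down if `{xᵢ} ∈ [0, S x)`
and up if `{xᵢ} ∈ (S x, 1)`. -/
noncomputable def Rmap (n : ℕ) (S : (Fin n → ℝ) → ℝ) (x : Fin n → ℝ) : Fin n → ℤ :=
  fun i => if Int.fract (x i) < S x then ⌊x i⌋ else ⌈x i⌉

/-- On the open interval `(k+z, k+1+z)` the rounding is constantly `k+1`. -/
lemma round_const (z : ℝ) (hz0 : 0 < z) (hz1 : z < 1) (k : ℤ) (y : ℝ)
    (hl : (k : ℝ) + z < y) (hu : y < (k : ℝ) + 1 + z) :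
    (if Int.fract y < z then ⌊y⌋ else ⌈y⌉) = k + 1 := by
  rcases lt_trichotomy y ((k : ℝ) + 1) with h | h | h
  · have hfloor : ⌊y⌋ = k := by
      rw [Int.floor_eq_iff]
      constructor
      · linarith
      · linarith
    have hfr : Int.fract y = y - k := by
      rw [Int.fract, hfloor]
    have : ¬ Int.fract y < z := by rw [hfr]; linarith
    rw [if_neg this, Int.ceil_eq_iff]
    constructor
    · push_cast; linarith
    · push_cast; linarith
  · have : y = ((k + 1 : ℤ) : ℝ) := by push_cast; linarith
    rw [this, Int.fract_intCast, if_pos hz0, Int.floor_intCast]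
  · have hfloor : ⌊y⌋ = k + 1 := by
      rw [Int.floor_eq_iff]
      constructor
      · push_cast; linarith
      · push_cast; linarith
    have hfr : Int.fract y = y - (k + 1) := by
      rw [Int.fract, hfloor]; push_cast; ring
    have : Int.fract y < z := by rw [hfr]; linarith
    rw [if_pos this, hfloor]

theorem stmt9 (n : ℕ) (S : (Fin n → ℝ) → ℝ)
    (hrange : ∀ x, S x ∈ Set.Ioo (0:ℝ) 1)
    (havoid : ∀ x, ∀ i, S x ≠ Int.fract (x i))
    (x Δ : Fin n → ℝ)
    (h1 : S (fun i => x i + Δ i) = S x)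
    (h2 : ∀ (i : Fin n), ∀ l ∈ Set.Icc (0:ℝ) 1, Int.fract (x i + l * Δ i) ≠ S x) :
    Rmap n S x = Rmap n S (fun i => x i + Δ i) := by
  obtain ⟨hz0, hz1⟩ := hrange x
  set z := S x with hzdef
  funext i
  set a := x i with ha
  set b := x i + Δ i with hb
  -- fract of any point between a and b is not z
  have hseg : ∀ c ∈ Set.uIcc a b, Int.fract c ≠ z := by
    intro c hc
    rw [← segment_eq_uIcc] at hc
    obtain ⟨u, v, hu, hv, huv, heq⟩ := hc
    have hu1 : u = 1 - v := by linarith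
    have hval : a + v * (b - a) = c := by
      rw [← heq]; simp only [smul_eq_mul, hu1]; ring
    have := h2 i v ⟨hv, by linarith⟩
    have hΔ : x i + v * Δ i = c := by
      rw [← hval, ha, hb]; ring
    rwa [hΔ] at this
  have hfz : ∀ (m : ℤ), Int.fract ((m : ℝ) + z) = z := by
    intro m
    rw [Int.fract_intCast_add, Int.fract_eq_self.mpr ⟨le_of_lt hz0, hz1⟩]
  set k := ⌊a - z⌋ with hk
  have hfa : Int.fract a ≠ z := (havoid x i).symm
  have hanotint : a - z ≠ (k : ℝ) := by
    intro h
    have : a = (k : ℝ) + z := by linarith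
    exact hfa (by rw [this, hfz])
  have hka : (k : ℝ) + z < a := by
    have h1' : (k : ℝ) ≤ a - z := Int.floor_le _
    have : (k : ℝ) < a - z := lt_of_le_of_ne h1' (Ne.symm hanotint)
    linarith
  have hka2 : a < (k : ℝ) + 1 + z := by
    have := Int.lt_floor_add_one (a - z)
    push_cast at this ⊢
    linarith
  -- b is in the same interval
  have hkb : (k : ℝ) + z < b := by
    by_contra h
    push_neg at h
    have hc : ((k : ℝ) + z) ∈ Set.uIcc a b := by
      rw [Set.mem_uIcc]; right; exact ⟨h, le_of_lt hka⟩
    exact hseg _ hc (hfz k)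
  have hkb2 : b < (k : ℝ) + 1 + z := by
    by_contra h
    push_neg at h
    have hc : ((k : ℝ) + 1 + z) ∈ Set.uIcc a b := by
      rw [Set.mem_uIcc]; left
      constructor
      · linarith
      · exact h
    have : Int.fract ((k : ℝ) + 1 + z) = z := by
      have := hfz (k + 1)
      push_cast at this
      rwa [show (k : ℝ) + 1 + z = k + 1 + z by ring]
    exact hseg _ hc this
  show (if Int.fract a < S x then ⌊a⌋ else ⌈a⌉) =
    (if Int.fract b < S (fun i => x i + Δ i) then ⌊b⌋ else ⌈b⌉)
  rw [h1, ← hzdef,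
    round_const z hz0 hz1 k a hka hka2,
    round_const z hz0 hz1 k b hkb hkb2]
end

section
/- Let D be a tiling body for a lattice L ⊆ ℝᵗ (translates D + z, z ∈ L, partition space), let k ≥ 1 be an integer, and let u be a random direction independent of position. Define η = Pr_{y ∈ D, u}[y + u ∉ D] and δ = Pr_{x ∈ D, u}[x + k·u ∉ D], where x, y are uniform on D. Then δ ≤ k·η. -/
open MeasureTheory

theorem stmt13 (t : ℕ) (L : AddSubgroup (Fin t → ℝ)) (hLc : Countable L)
    (D : Set (Fin t → ℝ)) (hD : MeasurableSet D) (hvol : volume D = 1)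
    (htile : ∀ x : Fin t → ℝ, ∃! z : Fin t → ℝ, z ∈ L ∧ x - z ∈ D)
    (ν : Measure (Fin t → ℝ)) [IsProbabilityMeasure ν]
    (k : ℕ) (hk : 1 ≤ k) :
    ((volume.restrict D).prod ν) {p : (Fin t → ℝ) × (Fin t → ℝ) | p.1 + (k : ℝ) • p.2 ∉ D} ≤
      (k : ENNReal) *
        ((volume.restrict D).prod ν) {p : (Fin t → ℝ) × (Fin t → ℝ) | p.1 + p.2 ∉ D} := by
  classical
  haveI : Countable L := hLc
  choose ρ hρ using htile
  have hmemL : ∀ x, ρ x ∈ L := fun x => (hρ x).1.1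
  have hrD : ∀ x, x - ρ x ∈ D := fun x => (hρ x).1.2
  have huniq : ∀ x z, z ∈ L → x - z ∈ D → z = ρ x := fun x z hz hd => (hρ x).2 z ⟨hz, hd⟩
  set r : (Fin t → ℝ) → (Fin t → ℝ) := fun x => x - ρ x with hr
  have hrfix : ∀ x ∈ D, r x = x := by
    intro x hx
    have h0 : (0 : Fin t → ℝ) = ρ x := huniq x 0 L.zero_mem (by simpa using hx)
    simp [hr, ← h0]
  -- measurability of r
  have hrm : Measurable r := by
    intro A hA
    have heq : r ⁻¹' A = ⋃ z : L, ((fun x => x - (z : Fin t → ℝ)) ⁻¹' D) ∩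
        ((fun x => x - (z : Fin t → ℝ)) ⁻¹' A) := by
      ext x
      simp only [Set.mem_preimage, Set.mem_iUnion, Set.mem_inter_iff]
      constructor
      · intro hx
        exact ⟨⟨ρ x, hmemL x⟩, hrD x, hx⟩
      · rintro ⟨z, hzD, hzA⟩
        have : (z : Fin t → ℝ) = ρ x := huniq x z z.2 hzD
        simpa [hr, ← this] using hzA
    rw [heq]
    exact MeasurableSet.iUnion fun z =>
      ((measurable_sub_const _ hD).inter (measurable_sub_const _ hA))
  -- the map x ↦ r (x + v) preserves volume.restrict D
  have hmap : ∀ v : Fin t → ℝ,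
      Measure.map (fun x => r (x + v)) (volume.restrict D) = volume.restrict D := by
    intro v
    have hTm : Measurable fun x => r (x + v) := hrm.comp (measurable_add_const v)
    ext A hA
    rw [Measure.map_apply hTm hA, Measure.restrict_apply hA, Measure.restrict_apply (hTm hA)]
    set B := A ∩ D with hB
    have hBm : MeasurableSet B := hA.inter hD
    have hBD : B ⊆ D := Set.inter_subset_right
    -- decompose the preimage along the tiling
    have hdec : (fun x => r (x + v)) ⁻¹' A ∩ D =
        ⋃ z : L, ((fun x => x + (v - (z : Fin t → ℝ))) ⁻¹' B) ∩ D := by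
      ext x
      simp only [Set.mem_inter_iff, Set.mem_preimage, Set.mem_iUnion]
      constructor
      · rintro ⟨hxA, hxD⟩
        refine ⟨⟨ρ (x + v), hmemL _⟩, ?_, hxD⟩
        have hxe : x + (v - ρ (x + v)) = r (x + v) := by
          simp only [hr]; abel
        rw [hxe]
        exact ⟨hxA, hrD _⟩
      · rintro ⟨z, hzB, hxD⟩
        have hmem : x + (v - (z : Fin t → ℝ)) = (x + v) - (z : Fin t → ℝ) := by abel
        rw [hmem] at hzB
        have hz : (z : Fin t → ℝ) = ρ (x + v) := huniq _ _ z.2 (hBD hzB)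
        refine ⟨?_, hxD⟩
        have hre : r (x + v) = (x + v) - (z : Fin t → ℝ) := by rw [hr]; simp [← hz]
        rw [hre]
        exact hzB.1
    rw [hdec]
    -- disjointness of the pieces
    have hdisj : Pairwise (Function.onFun Disjoint fun z : L =>
        ((fun x => x + (v - (z : Fin t → ℝ))) ⁻¹' B) ∩ D) := by
      intro z z' hzz'
      refine Set.disjoint_left.2 ?_
      rintro x ⟨hx, -⟩ ⟨hx', -⟩
      apply hzz'
      have h1 : (x + v) - (z : Fin t → ℝ) ∈ D := by
        have : x + (v - (z : Fin t → ℝ)) = (x + v) - (z : Fin t → ℝ) := by abel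
        exact this ▸ hBD hx
      have h1' : (x + v) - (z' : Fin t → ℝ) ∈ D := by
        have : x + (v - (z' : Fin t → ℝ)) = (x + v) - (z' : Fin t → ℝ) := by abel
        exact this ▸ hBD hx'
      exact Subtype.ext ((huniq _ _ z.2 h1).trans (huniq _ _ z'.2 h1').symm)
    have hmeas : ∀ z : L, MeasurableSet
        (((fun x => x + (v - (z : Fin t → ℝ))) ⁻¹' B) ∩ D) := fun z =>
      ((measurable_add_const _) hBm).inter hD
    rw [measure_iUnion hdisj hmeas]
    -- compute each piece by translation invariance
    have hpiece : ∀ z : L, volume (((fun x => x + (v - (z : Fin t → ℝ))) ⁻¹' B) ∩ D) =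
        volume (B ∩ {y | y - (v - (z : Fin t → ℝ)) ∈ D}) := by
      intro z
      set c := v - (z : Fin t → ℝ)
      have hset : ((fun x => x + c) ⁻¹' B) ∩ D =
          (fun x => x + c) ⁻¹' (B ∩ {y | y - c ∈ D}) := by
        ext x
        simp only [Set.mem_inter_iff, Set.mem_preimage, Set.mem_setOf_eq, add_sub_cancel_right]
      rw [hset, measure_preimage_add_right]
    simp_rw [hpiece]
    -- the translated copies of D tile space
    have hEdisj : Pairwise (Function.onFun Disjoint fun z : L =>
        B ∩ {y | y - (v - (z : Fin t → ℝ)) ∈ D}) := by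
      intro z z' hzz'
      refine Set.disjoint_left.2 ?_
      rintro y ⟨-, hy⟩ ⟨-, hy'⟩
      apply hzz'
      have h1 : (y - v) - (-(z : Fin t → ℝ)) ∈ D := by
        have : y - (v - (z : Fin t → ℝ)) = (y - v) - (-(z : Fin t → ℝ)) := by abel
        exact this ▸ hy
      have h1' : (y - v) - (-(z' : Fin t → ℝ)) ∈ D := by
        have : y - (v - (z' : Fin t → ℝ)) = (y - v) - (-(z' : Fin t → ℝ)) := by abel
        exact this ▸ hy'
      have := (huniq _ _ (L.neg_mem z.2) h1).trans (huniq _ _ (L.neg_mem z'.2) h1').symm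
      exact Subtype.ext (neg_injective this)
    have hEmeas : ∀ z : L, MeasurableSet (B ∩ {y | y - (v - (z : Fin t → ℝ)) ∈ D}) :=
      fun z => hBm.inter (measurable_sub_const _ hD)
    rw [← measure_iUnion hEdisj hEmeas]
    congr 1
    ext y
    simp only [Set.mem_iUnion, Set.mem_inter_iff, Set.mem_setOf_eq]
    constructor
    · rintro ⟨z, hyB, -⟩; exact hyB
    · intro hyB
      refine ⟨⟨-ρ (y - v), L.neg_mem (hmemL _)⟩, hyB, ?_⟩
      show y - (v - (-ρ (y - v))) ∈ D
      have : y - (v - (-ρ (y - v))) = (y - v) - ρ (y - v) := by abel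
      rw [this]
      exact hrD _
  -- per-direction bound
  have hstep : ∀ u : Fin t → ℝ,
      volume.restrict D {x | x + (k : ℝ) • u ∉ D} ≤
        (k : ENNReal) * volume.restrict D {x | x + u ∉ D} := by
    intro u
    have hSm : ∀ c : ℝ, MeasurableSet {x : Fin t → ℝ | x + c • u ∉ D} :=
      fun c => (measurable_add_const (c • u)) hD.compl
    have hTm : ∀ j : ℕ, Measurable fun x : Fin t → ℝ => r (x + (j : ℝ) • u) :=
      fun j => hrm.comp (measurable_add_const _)
    have hBadm : ∀ j : ℕ, MeasurableSet {x : Fin t → ℝ | r (x + (j : ℝ) • u) + u ∉ D} := by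
      intro j
      exact ((hTm j).add_const u) hD.compl
    -- inclusion: if the k-step lands outside, some unit step went outside
    have hincl : D ∩ {x | x + (k : ℝ) • u ∉ D} ⊆
        ⋃ j ∈ Finset.range k, {x | r (x + (j : ℝ) • u) + u ∉ D} := by
      rintro x ⟨hxD, hxk⟩
      by_contra hcon
      simp only [Set.mem_iUnion, Finset.mem_range, Set.mem_setOf_eq, not_exists,
        not_not] at hcon
      apply hxk
      have hind : ∀ j, j ≤ k → x + (j : ℝ) • u ∈ D := by
        intro j
        induction j with
        | zero => intro _; simpa using hxD
        | succ n ih =>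
          intro hn
          have hnD : x + (n : ℝ) • u ∈ D := ih (Nat.le_of_succ_le hn)
          have := hcon n (Nat.lt_of_succ_le hn)
          rw [hrfix _ hnD] at this
          have he : x + ((n : ℝ) + 1) • u = x + (n : ℝ) • u + u := by
            rw [add_smul, one_smul]; abel
          rw [show ((n + 1 : ℕ) : ℝ) = (n : ℝ) + 1 by push_cast; ring, he]
          exact this
      exact hind k le_rfl
    have hb : volume.restrict D {x | x + (k : ℝ) • u ∉ D} ≤
        ∑ j ∈ Finset.range k, volume.restrict D {x | r (x + (j : ℝ) • u) + u ∉ D} := by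
      calc volume.restrict D {x | x + (k : ℝ) • u ∉ D}
          = volume ({x | x + (k : ℝ) • u ∉ D} ∩ D) := Measure.restrict_apply (hSm k)
        _ ≤ volume ((⋃ j ∈ Finset.range k, {x | r (x + (j : ℝ) • u) + u ∉ D}) ∩ D) :=
            measure_mono fun x hx => ⟨hincl ⟨hx.2, hx.1⟩, hx.2⟩
        _ = volume.restrict D (⋃ j ∈ Finset.range k, {x | r (x + (j : ℝ) • u) + u ∉ D}) :=
            (Measure.restrict_apply
              (Finset.measurableSet_biUnion _ fun j _ => hBadm j)).symm
        _ ≤ ∑ j ∈ Finset.range k, volume.restrict D {x | r (x + (j : ℝ) • u) + u ∉ D} :=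
            measure_biUnion_finset_le _ _
    -- each term equals the one-step probability
    have hCm : MeasurableSet {y : Fin t → ℝ | y + u ∉ D} := (measurable_add_const u) hD.compl
    have hterm : ∀ j : ℕ, volume.restrict D {x | r (x + (j : ℝ) • u) + u ∉ D} =
        volume.restrict D {x | x + u ∉ D} := by
      intro j
      have hpre : {x | r (x + (j : ℝ) • u) + u ∉ D} =
          (fun x => r (x + (j : ℝ) • u)) ⁻¹' {y | y + u ∉ D} := rfl
      rw [hpre, ← Measure.map_apply (hTm j) hCm, hmap]
    calc volume.restrict D {x | x + (k : ℝ) • u ∉ D}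
        ≤ ∑ j ∈ Finset.range k, volume.restrict D {x | r (x + (j : ℝ) • u) + u ∉ D} := hb
      _ = ∑ _j ∈ Finset.range k, volume.restrict D {x | x + u ∉ D} :=
          Finset.sum_congr rfl fun j _ => hterm j
      _ = (k : ENNReal) * volume.restrict D {x | x + u ∉ D} := by
          rw [Finset.sum_const, Finset.card_range, nsmul_eq_mul]
  -- put things together via Fubini over the direction
  have hP1 : MeasurableSet {p : (Fin t → ℝ) × (Fin t → ℝ) | p.1 + (k : ℝ) • p.2 ∉ D} :=
    (measurable_fst.add (measurable_snd.const_smul (k : ℝ))) hD.compl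
  have hP2 : MeasurableSet {p : (Fin t → ℝ) × (Fin t → ℝ) | p.1 + p.2 ∉ D} :=
    (measurable_fst.add measurable_snd) hD.compl
  rw [Measure.prod_apply_symm hP1, Measure.prod_apply_symm hP2]
  calc ∫⁻ u, volume.restrict D
        ((fun x => (x, u)) ⁻¹' {p : (Fin t → ℝ) × (Fin t → ℝ) | p.1 + (k : ℝ) • p.2 ∉ D}) ∂ν
      ≤ ∫⁻ u, (k : ENNReal) * volume.restrict D
          ((fun x => (x, u)) ⁻¹' {p : (Fin t → ℝ) × (Fin t → ℝ) | p.1 + p.2 ∉ D}) ∂ν :=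
        lintegral_mono fun u => hstep u
    _ = (k : ENNReal) * ∫⁻ u, volume.restrict D
          ((fun x => (x, u)) ⁻¹' {p : (Fin t → ℝ) × (Fin t → ℝ) | p.1 + p.2 ∉ D}) ∂ν :=
        lintegral_const_mul' _ _ (ENNReal.natCast_ne_top k)
end

section
/- Let D ⊆ ℝⁿ be a tiling body for ℤⁿ, ε > 0, and k ∈ ℕ. If Pr_{x ∈ D, Δ ∼ N(0, 4^{−(k+1)} Iₙ)}[x and x + Δ lie in different cells of the tiling] ≤ 2A·2^{−(k+1)}, then Pr_{x ∈ D, Δ' ∼ N(0, 4^{−k} Iₙ)}[x and x + Δ' lie in different cells] ≤ 2A·2^{−k}. That is, writing NS(σ) for the probability that a uniform point of D and its Gaussian perturbation with coordinate variance σ² lie in different cells, NS(2σ) ≤ 2·NS(σ). -/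
open MeasureTheory ProbabilityTheory
open scoped NNReal

lemma pi_gauss_map (n : ℕ) (v : ℝ≥0) :
    (Measure.pi fun _ : Fin n => gaussianReal 0 v).map (fun Δ i => 2 * Δ i) =
      Measure.pi fun _ : Fin n => gaussianReal 0 (4 * v) := by
  refine (Measure.pi_eq fun s hs => ?_).symm
  have hmeas : Measurable (fun Δ : Fin n → ℝ => fun i => 2 * Δ i) :=
    measurable_pi_lambda _ fun i => (measurable_pi_apply i).const_mul 2
  rw [Measure.map_apply hmeas (MeasurableSet.univ_pi hs)]
  have hpre : (fun Δ : Fin n → ℝ => fun i => 2 * Δ i) ⁻¹' Set.pi Set.univ s =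
      Set.pi Set.univ fun i => (fun x : ℝ => 2 * x) ⁻¹' s i := by
    ext x; simp [Set.mem_pi]
  rw [hpre, Measure.pi_pi]
  refine Finset.prod_congr rfl fun i _ => ?_
  have h4 : (⟨(2:ℝ)^2, sq_nonneg _⟩ * v : ℝ≥0) = 4 * v := by
    congr 1
    ext
    show (2:ℝ)^2 = ((4:ℝ≥0):ℝ)
    norm_num
  have this : (gaussianReal 0 v).map (fun x : ℝ => 2 * x) = gaussianReal 0 (4 * v) := by
    have := ProbabilityTheory.gaussianReal_map_const_mul (μ := 0) (v := v) (2 : ℝ)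
    rw [mul_zero] at this
    rw [← h4]
    exact this
  have hm : Measurable fun x : ℝ => 2 * x := by fun_prop
  rw [← this, Measure.map_apply hm (hs i)]

theorem stmt16 (n : ℕ) (D : Set (Fin n → ℝ)) (hD : MeasurableSet D)
    (hvol : volume D = 1)
    (htile : ∀ x : Fin n → ℝ, ∃! z : Fin n → ℤ, (fun i => x i - (z i : ℝ)) ∈ D)
    (A : ℝ) (k : ℕ)
    (h : (((volume.restrict D).prod
          (Measure.pi fun _ : Fin n => gaussianReal 0 ((4 : ℝ≥0)⁻¹ ^ (k + 1))))
          {p : (Fin n → ℝ) × (Fin n → ℝ) | p.1 + p.2 ∉ D}).toReal ≤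
        2 * A * (2 : ℝ)⁻¹ ^ (k + 1)) :
    (((volume.restrict D).prod
        (Measure.pi fun _ : Fin n => gaussianReal 0 ((4 : ℝ≥0)⁻¹ ^ k)))
        {p : (Fin n → ℝ) × (Fin n → ℝ) | p.1 + p.2 ∉ D}).toReal ≤
      2 * A * (2 : ℝ)⁻¹ ^ k := by
  set μ := volume.restrict D with hμ
  set γ := Measure.pi fun _ : Fin n => gaussianReal 0 ((4 : ℝ≥0)⁻¹ ^ (k + 1)) with hγ
  have hv : (4 : ℝ≥0) * ((4 : ℝ≥0)⁻¹ ^ (k + 1)) = (4 : ℝ≥0)⁻¹ ^ k := by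
    rw [pow_succ, mul_comm ((4 : ℝ≥0)⁻¹ ^ k), ← mul_assoc]
    norm_num
  have hγ2 : (Measure.pi fun _ : Fin n => gaussianReal 0 ((4 : ℝ≥0)⁻¹ ^ k)) =
      γ.map (fun Δ i => 2 * Δ i) := by
    rw [hγ, pi_gauss_map, hv]
  have hμprob : IsProbabilityMeasure μ := ⟨by rw [hμ, Measure.restrict_apply_univ]; exact hvol⟩
  have hmeas2 : Measurable (fun Δ : Fin n → ℝ => fun i => 2 * Δ i) :=
    measurable_pi_lambda _ fun i => (measurable_pi_apply i).const_mul 2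
  have haddmeas : Measurable (fun p : (Fin n → ℝ) × (Fin n → ℝ) => p.1 + p.2) :=
    measurable_fst.add measurable_snd
  have hSmeas : MeasurableSet {p : (Fin n → ℝ) × (Fin n → ℝ) | p.1 + p.2 ∉ D} :=
    (haddmeas hD).compl
  have hdouble : ∀ x Δ : Fin n → ℝ, (x + fun i => 2 * Δ i) = x + Δ + Δ := by
    intro x Δ; ext i; simp only [Pi.add_apply]; ring
  have step1 : (μ.prod (Measure.pi fun _ : Fin n => gaussianReal 0 ((4 : ℝ≥0)⁻¹ ^ k)))
      {p : (Fin n → ℝ) × (Fin n → ℝ) | p.1 + p.2 ∉ D} =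
      (μ.prod γ) {p : (Fin n → ℝ) × (Fin n → ℝ) |
        p.1 + (fun i => 2 * p.2 i) ∉ D} := by
    have hmp : (μ.prod (Measure.pi fun _ : Fin n => gaussianReal 0 ((4 : ℝ≥0)⁻¹ ^ k)))
        = (μ.prod γ).map (Prod.map id (fun Δ i => 2 * Δ i)) := by
      rw [hγ2, ← Measure.map_prod_map _ _ measurable_id hmeas2, Measure.map_id]
    rw [hmp, Measure.map_apply (measurable_id.prodMap hmeas2) hSmeas]
    rfl
  set B := {p : (Fin n → ℝ) × (Fin n → ℝ) | p.1 + p.2 ∉ D} with hB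
  set C := {p : (Fin n → ℝ) × (Fin n → ℝ) |
      p.1 + p.2 ∈ D ∧ p.1 + (fun i => 2 * p.2 i) ∉ D} with hC
  have hCmeas : MeasurableSet C := by
    refine MeasurableSet.inter (haddmeas hD) ?_
    exact ((measurable_fst.add (hmeas2.comp measurable_snd)) hD).compl
  have hsub : {p : (Fin n → ℝ) × (Fin n → ℝ) | p.1 + (fun i => 2 * p.2 i) ∉ D} ⊆ B ∪ C := by
    intro p hp
    by_cases hmem : p.1 + p.2 ∈ D
    · exact Or.inr ⟨hmem, hp⟩
    · exact Or.inl hmem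
  have hCB : (μ.prod γ) C ≤ (μ.prod γ) B := by
    rw [Measure.prod_apply_symm hCmeas, Measure.prod_apply_symm hSmeas]
    refine lintegral_mono fun Δ => ?_
    have key : ((fun x => (x, Δ)) ⁻¹' C) =
        (· + Δ) ⁻¹' {u : Fin n → ℝ | u ∈ D ∧ u + Δ ∉ D} := by
      ext x
      simp only [hC, Set.mem_preimage, Set.mem_setOf_eq, hdouble x Δ]
    rw [key]
    calc μ ((· + Δ) ⁻¹' {u : Fin n → ℝ | u ∈ D ∧ u + Δ ∉ D})
        ≤ volume ((· + Δ) ⁻¹' {u : Fin n → ℝ | u ∈ D ∧ u + Δ ∉ D}) :=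
          Measure.restrict_le_self _
      _ = volume {u : Fin n → ℝ | u ∈ D ∧ u + Δ ∉ D} :=
          measure_preimage_add_right volume Δ _
      _ = μ ((fun x => (x, Δ)) ⁻¹' B) := by
          rw [hμ, Measure.restrict_apply' hD]
          congr 1
          ext u
          simp [hB, and_comm]
  have hmain : (μ.prod γ) {p : (Fin n → ℝ) × (Fin n → ℝ) | p.1 + (fun i => 2 * p.2 i) ∉ D}
      ≤ 2 * (μ.prod γ) B := by
    calc (μ.prod γ) {p : (Fin n → ℝ) × (Fin n → ℝ) | p.1 + (fun i => 2 * p.2 i) ∉ D}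
        ≤ (μ.prod γ) (B ∪ C) := measure_mono hsub
      _ ≤ (μ.prod γ) B + (μ.prod γ) C := measure_union_le _ _
      _ ≤ (μ.prod γ) B + (μ.prod γ) B := add_le_add le_rfl hCB
      _ = 2 * (μ.prod γ) B := (two_mul _).symm
  rw [step1]
  have h2B := ENNReal.toReal_mono (by finiteness) hmain
  rw [ENNReal.toReal_mul, ENNReal.toReal_ofNat] at h2B
  calc ((μ.prod γ) {p : (Fin n → ℝ) × (Fin n → ℝ) | p.1 + (fun i => 2 * p.2 i) ∉ D}).toReal
      ≤ 2 * ((μ.prod γ) B).toReal := h2B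
    _ ≤ 2 * (2 * A * (2 : ℝ)⁻¹ ^ (k + 1)) := by linarith [h]
    _ = 2 * A * (2 : ℝ)⁻¹ ^ k := by
        rw [pow_succ]
        ring
end

section
/- Let x, Δ ∈ ℝⁿ with Δ ≠ 0, let D ⊆ ℝⁿ, let 0 < δ ≤ 2^{−m}, and call a point y ∈ (x, x+Δ) h-isolated if y ∈ ∂D and the ball of radius h around y contains neither x, nor x+Δ, nor any other point of ∂D. Let ℓ = g_m(x,Δ) be the number of (2^{−m}‖Δ‖₂)-isolated points in [x, x+Δ]. If y is chosen uniformly at random on the segment [x, x+Δ], then the probability that the open segment (y, y + δΔ) contains exactly one point of ∂D (hence y and y + δΔ lie on opposite sides locally) is at least δ·ℓ. -/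
open MeasureTheory

theorem stmt17 (n m : ℕ) (D : Set (EuclideanSpace ℝ (Fin n)))
    (x Δ : EuclideanSpace ℝ (Fin n)) (hΔ : Δ ≠ 0)
    (δ : ℝ) (hδ0 : 0 < δ) (hδm : δ ≤ (2:ℝ) ^ (-(m : ℤ)))
    (Iso : Set ℝ)
    -- `Iso` is the set of parameters `t` such that `x + tΔ` is a
    -- `(2^{-m}‖Δ‖)`-isolated point of `∂D` on the open segment `(x, x+Δ)`.
    (hIso : Iso = {t : ℝ | t ∈ Set.Ioo (0:ℝ) 1 ∧ (x + t • Δ) ∈ frontier D ∧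
      ∀ p ∈ Metric.ball (x + t • Δ) ((2:ℝ) ^ (-(m : ℤ)) * ‖Δ‖),
        (p ∈ frontier D ∨ p = x ∨ p = x + Δ) → p = x + t • Δ})
    (hfin : Iso.Finite) :
    ENNReal.ofReal (δ * hfin.toFinset.card) ≤
      volume {t ∈ Set.Icc (0:ℝ) 1 |
        ∃! s : ℝ, s ∈ Set.Ioo (0:ℝ) δ ∧ x + (t + s) • Δ ∈ frontier D} := by
  have hΔn : (0:ℝ) < ‖Δ‖ := norm_pos_iff.mpr hΔ
  set c := (2:ℝ) ^ (-(m : ℤ)) with hc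
  have hc0 : 0 < c := by positivity
  have hdist : ∀ a b : ℝ, dist (x + a • Δ) (x + b • Δ) = |a - b| * ‖Δ‖ := by
    intro a b
    rw [dist_eq_norm]
    have h1 : (x + a • Δ) - (x + b • Δ) = (a - b) • Δ := by
      rw [sub_smul]; abel
    rw [h1, norm_smul, Real.norm_eq_abs]
  have hsmul_inj : ∀ a b : ℝ, x + a • Δ = x + b • Δ → a = b := by
    intro a b h
    have h2 : (a - b) • Δ = 0 := by
      rw [sub_smul]
      have := add_left_cancel h
      rw [this]; abel
    rcases smul_eq_zero.mp h2 with h3 | h3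
    · linarith [sub_eq_zero.mp (by exact_mod_cast h3)]
    · exact absurd h3 hΔ
  -- every isolated parameter satisfies δ ≤ z
  have hδz : ∀ z ∈ Iso, δ ≤ z := by
    intro z hz
    rw [hIso] at hz
    obtain ⟨⟨hz0, hz1⟩, hzf, hziso⟩ := hz
    by_contra h
    push_neg at h
    have hball : x ∈ Metric.ball (x + z • Δ) (c * ‖Δ‖) := by
      rw [Metric.mem_ball]
      have : dist x (x + z • Δ) = |0 - z| * ‖Δ‖ := by
        simpa using hdist 0 z
      rw [this, zero_sub, abs_neg, abs_of_pos hz0]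
      have : z < c := lt_of_lt_of_le h hδm
      exact mul_lt_mul_of_pos_right this hΔn
    have := hziso x hball (Or.inr (Or.inl rfl))
    have hz' : z • Δ = 0 := by
      have := this.symm
      rwa [add_eq_left] at this
    rcases smul_eq_zero.mp hz' with h3 | h3
    · exact absurd h3 (ne_of_gt hz0)
    · exact absurd h3 hΔ
  -- separation of distinct isolated parameters
  have hsep : ∀ z ∈ Iso, ∀ z' ∈ Iso, z ≠ z' → δ ≤ |z - z'| := by
    intro z hz z' hz' hne
    rw [hIso] at hz hz'
    obtain ⟨_, hzf, hziso⟩ := hz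
    obtain ⟨_, hz'f, _⟩ := hz'
    by_contra h
    push_neg at h
    have hball : x + z' • Δ ∈ Metric.ball (x + z • Δ) (c * ‖Δ‖) := by
      rw [Metric.mem_ball, hdist z' z]
      have h1 : |z' - z| < c := by
        rw [abs_sub_comm]; exact lt_of_lt_of_le h hδm
      exact mul_lt_mul_of_pos_right h1 hΔn
    have := hziso _ hball (Or.inl hz'f)
    exact hne (hsmul_inj z z' this.symm)
  set S := {t ∈ Set.Icc (0:ℝ) 1 |
      ∃! s : ℝ, s ∈ Set.Ioo (0:ℝ) δ ∧ x + (t + s) • Δ ∈ frontier D} with hS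
  -- intervals are inside S
  have hsub : ∀ z ∈ hfin.toFinset, Set.Ioo (z - δ) z ⊆ S := by
    intro z hzF t ht
    have hz : z ∈ Iso := hfin.mem_toFinset.mp hzF
    have hzIso := hz
    rw [hIso] at hzIso
    obtain ⟨⟨hz0, hz1⟩, hzf, hziso⟩ := hzIso
    have hδle : δ ≤ z := hδz z hz
    obtain ⟨ht1, ht2⟩ := ht
    constructor
    · exact ⟨by linarith, by linarith⟩
    · refine ⟨z - t, ⟨⟨by linarith, by linarith⟩, ?_⟩, ?_⟩
      · have : t + (z - t) = z := by ring
        rw [this]; exact hzf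
      · rintro s' ⟨⟨hs0, hsδ⟩, hfr⟩
        have hball : x + (t + s') • Δ ∈ Metric.ball (x + z • Δ) (c * ‖Δ‖) := by
          rw [Metric.mem_ball, hdist (t + s') z]
          have h1 : |t + s' - z| < δ := by
            rw [abs_sub_lt_iff]; constructor <;> linarith
          calc |t + s' - z| * ‖Δ‖ < δ * ‖Δ‖ := mul_lt_mul_of_pos_right h1 hΔn
            _ ≤ c * ‖Δ‖ := mul_le_mul_of_nonneg_right hδm hΔn.le
        have := hziso _ hball (Or.inl hfr)
        have h2 : t + s' = z := hsmul_inj _ _ this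
        linarith
  -- intervals are pairwise disjoint
  have hdisj : (hfin.toFinset : Set ℝ).PairwiseDisjoint
      (fun z => Set.Ioo (z - δ) z) := by
    intro z hzF z' hz'F hne
    have hz : z ∈ Iso := hfin.mem_toFinset.mp hzF
    have hz' : z' ∈ Iso := hfin.mem_toFinset.mp hz'F
    have hsepδ := hsep z hz z' hz' hne
    simp only [Function.onFun]
    rw [Set.disjoint_left]
    rintro t ⟨ht1, ht2⟩ ⟨ht3, ht4⟩
    have hlt : |z - z'| < δ := abs_sub_lt_iff.mpr ⟨by linarith, by linarith⟩
    linarith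
  calc ENNReal.ofReal (δ * hfin.toFinset.card)
      = ∑ z ∈ hfin.toFinset, ENNReal.ofReal δ := by
        rw [Finset.sum_const, nsmul_eq_mul, ENNReal.ofReal_mul hδ0.le, mul_comm]
        congr 1
        simp [ENNReal.ofReal_natCast]
    _ = ∑ z ∈ hfin.toFinset, volume (Set.Ioo (z - δ) z) := by
        refine Finset.sum_congr rfl fun z _ => ?_
        rw [Real.volume_Ioo]
        congr 1; ring
    _ = volume (⋃ z ∈ hfin.toFinset, Set.Ioo (z - δ) z) :=
        (measure_biUnion_finset hdisj fun z _ => measurableSet_Ioo).symm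
    _ ≤ volume S := measure_mono (Set.iUnion₂_subset hsub)
end
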